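/- arXiv:1511.04298 — 9 statements merged into one kernel-verified Lean document; each statement's English description precedes it below -/
import Mathlib

section
/- Gessel's model admits the rational invariant pair (I₁, I₂): for every field k and all t, x, y ∈ k with t ≠ 0, x ≠ 0, y ≠ 0, y ≠ −1, if K(x,y) = t(1 + y + x²y + x²y²) − xy = 0, then I₁(x) = I₂(y), where I₁(x) = −t/x² + 1/x + 2t + x − t x² and I₂(y) = 1/(t(1+y)(1+1/y)) + t(1+y)(1+1/y). -/
/-!
The kernel factors as `K(x,y) = t(1+y)(1+x²y) - xy`, so on the curve with `xy ≠ 0` both factors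
are nonzero and `t = xy / ((1+y)(1+x²y))`. Substituting this value of `t` turns `I₁(x) = I₂(y)`
into a polynomial identity in `x` and `y`.
-/

namespace Gessel

variable {k : Type*} [Field k]

def kernel (t x y : k) : k := t * (1 + y + x ^ 2 * y + x ^ 2 * y ^ 2) - x * y

def invariantX (t x : k) : k := -t / x ^ 2 + 1 / x + 2 * t + x - t * x ^ 2

def invariantY (t y : k) : k := 1 / (t * (1 + y) * (1 + 1 / y)) + t * (1 + y) * (1 + 1 / y)

variable {t x y : k}

theorem kernel_eq (t x y : k) : kernel t x y = t * ((1 + y) * (1 + x ^ 2 * y)) - x * y := by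
  unfold kernel
  ring

theorem kernel_factor_ne_zero (hx : x ≠ 0) (hy : y ≠ 0) (hK : kernel t x y = 0) :
    (1 + y) * (1 + x ^ 2 * y) ≠ 0 := by
  intro h
  rw [kernel_eq, h, mul_zero, zero_sub, neg_eq_zero] at hK
  exact mul_ne_zero hx hy hK

theorem eq_div_of_kernel_eq_zero (hx : x ≠ 0) (hy : y ≠ 0) (hK : kernel t x y = 0) :
    t = x * y / ((1 + y) * (1 + x ^ 2 * y)) := by
  rw [eq_div_iff (kernel_factor_ne_zero hx hy hK), ← sub_eq_zero, ← kernel_eq, hK]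

theorem invariantX_eq_invariantY_of_eq_div (hx : x ≠ 0) (hy : y ≠ 0)
    (hy1 : 1 + y ≠ 0) (hxy : 1 + x ^ 2 * y ≠ 0) (ht : t = x * y / ((1 + y) * (1 + x ^ 2 * y))) :
    invariantX t x = invariantY t y := by
  subst ht
  unfold invariantX invariantY
  -- `field_simp` meets this denominator both as `1 + y` and as `y + 1`.
  have hy1' : y + 1 ≠ 0 := by rwa [add_comm]
  field_simp
  ring

theorem invariantX_eq_invariantY_of_kernel_eq_zero (hx : x ≠ 0) (hy : y ≠ 0)
    (hK : kernel t x y = 0) : invariantX t x = invariantY t y :=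
  have hD := kernel_factor_ne_zero hx hy hK
  invariantX_eq_invariantY_of_eq_div hx hy (left_ne_zero_of_mul hD) (right_ne_zero_of_mul hD)
    (eq_div_of_kernel_eq_zero hx hy hK)

end Gessel

theorem gessel_invariants_general {k : Type*} [Field k] (t x y : k)
    (hx : x ≠ 0) (hy : y ≠ 0)
    (hK : t * (1 + y + x ^ 2 * y + x ^ 2 * y ^ 2) - x * y = 0) :
    -t / x ^ 2 + 1 / x + 2 * t + x - t * x ^ 2 =
      1 / (t * (1 + y) * (1 + 1 / y)) + t * (1 + y) * (1 + 1 / y) :=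
  Gessel.invariantX_eq_invariantY_of_kernel_eq_zero hx hy hK

/-- Gessel's model admits the rational invariant pair
`I₁(x) = -t/x² + 1/x + 2t + x - t x²` and
`I₂(y) = 1/(t(1+y)(1+1/y)) + t(1+y)(1+1/y)`:
they agree at every point of the kernel curve `K(x,y) = 0`. -/
theorem gessel_invariants {k : Type*} [Field k] (t x y : k)
    (ht : t ≠ 0) (hx : x ≠ 0) (hy : y ≠ 0) (hy1 : y ≠ -1)
    (hK : t * (1 + y + x ^ 2 * y + x ^ 2 * y ^ 2) - x * y = 0) :
    -t / x ^ 2 + 1 / x + 2 * t + x - t * x ^ 2 =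
      1 / (t * (1 + y) * (1 + 1 / y)) + t * (1 + y) * (1 + 1 / y) :=
  gessel_invariants_general t x y hx hy hK
end

section
/- Gessel's model is decoupled: for every field k and all t, x, y ∈ k with t ≠ 0, x ≠ 0, y ≠ −1, if K(x,y) = t(1 + y + x²y + x²y²) − xy = 0, then xy = F(x) + G(y) with F(x) = 1/t − 1/x and G(y) = −1/(t(1+y)). -/
/-- Gessel's model is decoupled: on the kernel curve `K(x,y) = 0` one has
`xy = F(x) + G(y)` with `F(x) = 1/t - 1/x` and `G(y) = -1/(t(1+y))`. -/
theorem gessel_decoupled {k : Type*} [Field k] (t x y : k)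
    (ht : t ≠ 0) (hx : x ≠ 0) (hy1 : y ≠ -1)
    (hK : t * (1 + y + x ^ 2 * y + x ^ 2 * y ^ 2) - x * y = 0) :
    x * y = (1 / t - 1 / x) + (-(1 / (t * (1 + y)))) := by
  have hy : 1 + y ≠ 0 := fun h => hy1 (by linear_combination h)
  -- `t x (1 + y) (x y - F(x) - G(y))` is exactly the kernel `K(x, y)`.
  field_simp
  linear_combination hK
end

section
/- Kreweras' model admits the rational invariant pair (I₁, I₂): for every field k and all t, x, y ∈ k with x ≠ 0, y ≠ 0, if K(x,y) = t(x²y² + x + y) − xy = 0, then I₁(x) = I₂(y), where I₁(x) = t/x² − 1/x − tx and I₂(y) = t/y² − 1/y − ty. -/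
section Kreweras

variable {k : Type*} [Field k]

def krewerasKernel (t x y : k) : k := t * (x ^ 2 * y ^ 2 + x + y) - x * y

def krewerasInvariant (t u : k) : k := t / u ^ 2 - 1 / u - t * u

theorem krewerasInvariant_sub_krewerasInvariant (t : k) {x y : k} (hx : x ≠ 0) (hy : y ≠ 0) :
    krewerasInvariant t x - krewerasInvariant t y =
      (y - x) * krewerasKernel t x y / (x ^ 2 * y ^ 2) := by
  unfold krewerasInvariant krewerasKernel
  field_simp
  ring

end Kreweras

/-- Kreweras' model admits the rational invariant pair
`I₁(x) = t/x² - 1/x - tx` and `I₂(y) = t/y² - 1/y - ty`: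
they agree at every point of the kernel curve `K(x,y) = 0`. -/
theorem kreweras_invariants {k : Type*} [Field k] (t x y : k)
    (hx : x ≠ 0) (hy : y ≠ 0)
    (hK : t * (x ^ 2 * y ^ 2 + x + y) - x * y = 0) :
    t / x ^ 2 - 1 / x - t * x = t / y ^ 2 - 1 / y - t * y := by
  have hdiff := krewerasInvariant_sub_krewerasInvariant t hx hy
  rw [krewerasKernel, hK, mul_zero, zero_div, sub_eq_zero] at hdiff
  exact hdiff
end

section
/- The reverse Kreweras model admits the rational invariant pair (I₁, I₂): for every field k and all t, x, y ∈ k with x ≠ 0, y ≠ 0, if K(x,y) = t(x²y + xy² + 1) − xy = 0, then I₁(x) = I₂(y), where I₁(x) = t x² − x − t/x and I₂(y) = t y² − y − t/y. -/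
/-- The reverse Kreweras model admits the rational invariant pair
`I₁(x) = tx² - x - t/x` and `I₂(y) = ty² - y - t/y`:
they agree at every point of the kernel curve `K(x,y) = 0`. -/
theorem reverse_kreweras_invariants {k : Type*} [Field k] (t x y : k)
    (hx : x ≠ 0) (hy : y ≠ 0)
    (hK : t * (x ^ 2 * y + x * y ^ 2 + 1) - x * y = 0) :
    t * x ^ 2 - x - t / x = t * y ^ 2 - y - t / y := by
  field_simp
  linear_combination (x - y) * hK
end

section
/- The double Kreweras model admits the rational invariant pair (I₁, I₂): for every field k and all t, x, y ∈ k with x ≠ 0, y ≠ 0, x ≠ −1, y ≠ −1, if K(x,y) = t(x²y² + x²y + xy² + x + y + 1) − xy = 0, then I₁(x) = I₂(y), where I₁(x) = t/x − tx − (1+2t)/(1+x) and I₂(y) = t/y − ty − (1+2t)/(1+y). -/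
/-- The double Kreweras model admits the rational invariant pair
`I₁(x) = t/x - tx - (1+2t)/(1+x)` and `I₂(y) = t/y - ty - (1+2t)/(1+y)`:
they agree at every point of the kernel curve `K(x,y) = 0`. -/
theorem double_kreweras_invariants {k : Type*} [Field k] (t x y : k)
    (hx : x ≠ 0) (hy : y ≠ 0) (hx1 : x ≠ -1) (hy1 : y ≠ -1)
    (hK : t * (x ^ 2 * y ^ 2 + x ^ 2 * y + x * y ^ 2 + x + y + 1) - x * y = 0) :
    t / x - t * x - (1 + 2 * t) / (1 + x) = t / y - t * y - (1 + 2 * t) / (1 + y) := by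
  have h1 : 1 + x ≠ 0 := fun h => hx1 (by linear_combination h)
  have h1' : 1 + y ≠ 0 := fun h => hy1 (by linear_combination h)
  field_simp
  linear_combination (y - x) * hK
end

section
/- Kreweras' model is decoupled: for every field k and all t, x, y ∈ k with t ≠ 0, x ≠ 0, y ≠ 0, if K(x,y) = t(x²y² + x + y) − xy = 0, then xy = F(x) + G(y) with F(x) = 1/t − 1/x and G(y) = −1/y. -/
/-- Kreweras' model is decoupled: on the kernel curve `K(x,y) = 0` one has
`xy = F(x) + G(y)` with `F(x) = 1/t - 1/x` and `G(y) = -1/y`. -/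
theorem kreweras_decoupled {k : Type*} [Field k] (t x y : k)
    (ht : t ≠ 0) (hx : x ≠ 0) (hy : y ≠ 0)
    (hK : t * (x ^ 2 * y ^ 2 + x + y) - x * y = 0) :
    x * y = (1 / t - 1 / x) + (-(1 / y)) := by
  field_simp
  linear_combination hK
end

section
/- The weighted Gessel-type model with parameter λ is decoupled with G(y) = −(1+λt)/(t(1+y)): for every field k and all t, λ, x, y₀, y₁ ∈ k with t ≠ 0, y₀ ≠ −1, y₁ ≠ −1, if K(x,y₀) = 0 and K(x,y₁) = 0, where K(x,y) = t(x²y² + 2x²y + x² + λx + y + 1) − xy, then x(y₀ − y₁) = G(y₀) − G(y₁). -/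
/-!
The combination `(1 + y₁) K(x, y₀) - (1 + y₀) K(x, y₁)` of the two kernel equations collapses to
`x (y₀ - y₁) (t x (1 + y₀)(1 + y₁) - (1 + λt)) = 0`. The line `x = 0` meets the kernel curve only
where `t (1 + y) = 0`, so either `y₀ = y₁` or `t x (1 + y₀)(1 + y₁) = 1 + λt`; in both cases
clearing the denominators of `G(y₀) - G(y₁)` gives the decoupling identity.
-/

section GesselKernel

variable {R : Type*} [CommRing R]

def gesselKernel (t lam x y : R) : R :=
  t * (x ^ 2 * y ^ 2 + 2 * x ^ 2 * y + x ^ 2 + lam * x + y + 1) - x * y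

theorem gesselKernel_zero_left (t lam y : R) : gesselKernel t lam 0 y = t * (1 + y) := by
  unfold gesselKernel
  ring

theorem gesselKernel_combination (t lam x y₀ y₁ : R) :
    (1 + y₁) * gesselKernel t lam x y₀ - (1 + y₀) * gesselKernel t lam x y₁ =
      x * (y₀ - y₁) * (t * x * (1 + y₀) * (1 + y₁) - (1 + lam * t)) := by
  unfold gesselKernel
  ring

end GesselKernel

theorem sub_mul_eq_zero_of_gesselKernel_eq_zero {k : Type*} [Field k] {t lam x y₀ y₁ : k}
    (hx : x ≠ 0) (hK₀ : gesselKernel t lam x y₀ = 0) (hK₁ : gesselKernel t lam x y₁ = 0) :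
    (y₀ - y₁) * (t * x * (1 + y₀) * (1 + y₁) - (1 + lam * t)) = 0 := by
  have h := gesselKernel_combination t lam x y₀ y₁
  rw [hK₀, hK₁, mul_zero, mul_zero, sub_zero, mul_assoc] at h
  exact (mul_eq_zero.mp h.symm).resolve_left hx

/-- The weighted Gessel-type model with parameter `λ = lam` is decoupled with
`G(y) = -(1+λt)/(t(1+y))`: if `y₀, y₁` are two roots of the kernel `K(x,·) = 0`,
then `x(y₀ - y₁) = G(y₀) - G(y₁)`. -/
theorem weighted_gessel_decoupled {k : Type*} [Field k] (t lam x y₀ y₁ : k)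
    (ht : t ≠ 0) (hy₀ : y₀ ≠ -1) (hy₁ : y₁ ≠ -1)
    (hK₀ : t * (x ^ 2 * y₀ ^ 2 + 2 * x ^ 2 * y₀ + x ^ 2 + lam * x + y₀ + 1) - x * y₀ = 0)
    (hK₁ : t * (x ^ 2 * y₁ ^ 2 + 2 * x ^ 2 * y₁ + x ^ 2 + lam * x + y₁ + 1) - x * y₁ = 0) :
    x * (y₀ - y₁) =
      (-(1 + lam * t) / (t * (1 + y₀))) - (-(1 + lam * t) / (t * (1 + y₁))) := by
  have hu₀ : 1 + y₀ ≠ 0 := fun h => hy₀ (eq_neg_of_add_eq_zero_right h)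
  have hu₁ : 1 + y₁ ≠ 0 := fun h => hy₁ (eq_neg_of_add_eq_zero_right h)
  have hx : x ≠ 0 := by
    rintro rfl
    exact mul_ne_zero ht hu₀ (gesselKernel_zero_left t lam y₀ ▸ hK₀)
  have key := sub_mul_eq_zero_of_gesselKernel_eq_zero (lam := lam) hx hK₀ hK₁
  field_simp
  linear_combination key
end

section
/- Model #4 (steps {(0,1),(1,0),(1,−1),(−1,0)}), which has an infinite group, is decoupled with G(y) = −y² + y/t + 1/y: for every field k and all t, x, y₀, y₁ ∈ k with t ≠ 0, y₀ ≠ 0, y₁ ≠ 0, if K(x,y₀) = 0 and K(x,y₁) = 0, where K(x,y) = t(xy² + x²y + x² + y) − xy, then x(y₀ − y₁) = G(y₀) − G(y₁). -/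
/-!
Viewed as a polynomial in `y`, the kernel is the quadratic `t x y² + (t x² + t - x) y + t x²`.
For two distinct roots, Vieta's formulas give `y₀ y₁ = x` and `y₀ + y₁ = 1/t - x - 1/x`, so
`G(y₀) - G(y₁) = (y₀ - y₁) (1/t - (y₀ + y₁) - 1/(y₀ y₁)) = (y₀ - y₁) x`.
-/

theorem vieta_of_quadratic_roots {R : Type*} [CommRing R] [NoZeroDivisors R]
    {a b c y₀ y₁ : R} (hne : y₀ ≠ y₁)
    (h₀ : a * y₀ ^ 2 + b * y₀ + c = 0) (h₁ : a * y₁ ^ 2 + b * y₁ + c = 0) :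
    a * (y₀ + y₁) = -b ∧ a * (y₀ * y₁) = c := by
  have hdiff : (y₀ - y₁) * (a * (y₀ + y₁) + b) = 0 := by linear_combination h₀ - h₁
  have hsum : a * (y₀ + y₁) = -b := by
    linear_combination (mul_eq_zero.mp hdiff).resolve_left (sub_ne_zero.mpr hne)
  exact ⟨hsum, by linear_combination y₀ * hsum - h₀⟩

/-- Model #4 (steps `{(0,1),(1,0),(1,-1),(-1,0)}`) is decoupled with
`G(y) = -y² + y/t + 1/y`: if `y₀, y₁` are two roots of the kernel `K(x,·) = 0`,
then `x(y₀ - y₁) = G(y₀) - G(y₁)`. -/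
theorem model4_decoupled {k : Type*} [Field k] (t x y₀ y₁ : k)
    (ht : t ≠ 0) (hy₀ : y₀ ≠ 0) (hy₁ : y₁ ≠ 0)
    (hK₀ : t * (x * y₀ ^ 2 + x ^ 2 * y₀ + x ^ 2 + y₀) - x * y₀ = 0)
    (hK₁ : t * (x * y₁ ^ 2 + x ^ 2 * y₁ + x ^ 2 + y₁) - x * y₁ = 0) :
    x * (y₀ - y₁) =
      (-y₀ ^ 2 + y₀ / t + 1 / y₀) - (-y₁ ^ 2 + y₁ / t + 1 / y₁) := by
  rcases eq_or_ne y₀ y₁ with rfl | hne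
  · ring
  have hx : x ≠ 0 := by
    rintro rfl
    exact mul_ne_zero ht hy₀ (by linear_combination hK₀)
  obtain ⟨hsum, hprod⟩ := vieta_of_quadratic_roots (a := t * x) (b := t * x ^ 2 + t - x)
    (c := t * x ^ 2) hne (by linear_combination hK₀) (by linear_combination hK₁)
  have hprod' : y₀ * y₁ = x :=
    mul_left_cancel₀ (mul_ne_zero ht hx) (by linear_combination hprod)
  have hsum' : y₀ + y₁ = 1 / t - x - 1 / x := by
    field_simp
    linear_combination hsum
  calc x * (y₀ - y₁) = (y₀ - y₁) * (1 / t - (y₀ + y₁) - 1 / (y₀ * y₁)) := by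
        rw [hsum', hprod']
        ring
    _ = _ := by
        field_simp
        ring
end

section
/- The simple walk model (steps {(1,0),(−1,0),(0,1),(0,−1)}) is not decoupled: there do not exist rational functions F ∈ ℚ(t)(x) and G ∈ ℚ(t)(y) such that, in an algebraic closure Ω of ℚ(t), xy = F(x) + G(y) holds for all (x,y) ∈ Ω² with K(x,y) = 0 at which F and G are defined, where K(x,y) = t(x²y + y + xy² + x) − xy. -/
noncomputable section

/-- The algebraic closure `Ω` of `ℚ(t)`. -/
abbrev Omega : Type := AlgebraicClosure (RatFunc ℚ)

/-- The embedding `ℚ(t) → Ω`. -/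
abbrev phi : RatFunc ℚ →+* Omega := algebraMap (RatFunc ℚ) Omega

/-- The image of the indeterminate `t` in `Ω`. -/
abbrev tOm : Omega := phi RatFunc.X


private lemma aux_inv_x {K : Type*} [Field K] {t x y : K} (hx : x ≠ 0)
    (h : t * x * y ^ 2 + (t * (x ^ 2 + 1) - x) * y + t * x = 0) :
    t * (x⁻¹ ^ 2 * y + y + x⁻¹ * y ^ 2 + x⁻¹) - x⁻¹ * y = 0 := by
  have hu : x * x⁻¹ = 1 := mul_inv_cancel₀ hx
  linear_combination x⁻¹ ^ 2 * h +
    (-t * y * (x * x⁻¹ + 1) - t * x⁻¹ * y ^ 2 - t * x⁻¹ + x⁻¹ * y) * hu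

private lemma aux_inv_y {K : Type*} [Field K] {t x y : K} (hy : y ≠ 0)
    (h : t * x * y ^ 2 + (t * (x ^ 2 + 1) - x) * y + t * x = 0) :
    t * (x ^ 2 * y⁻¹ + y⁻¹ + x * y⁻¹ ^ 2 + x) - x * y⁻¹ = 0 := by
  have hv : y * y⁻¹ = 1 := mul_inv_cancel₀ hy
  linear_combination y⁻¹ ^ 2 * h +
    (-t * x ^ 2 * y⁻¹ - t * y⁻¹ - t * x * (1 + y * y⁻¹) + x * y⁻¹) * hv

private lemma aux_inv_xy {K : Type*} [Field K] {t x y : K} (hx : x ≠ 0) (hy : y ≠ 0)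
    (h : t * x * y ^ 2 + (t * (x ^ 2 + 1) - x) * y + t * x = 0) :
    t * (x⁻¹ ^ 2 * y⁻¹ + y⁻¹ + x⁻¹ * y⁻¹ ^ 2 + x⁻¹) - x⁻¹ * y⁻¹ = 0 := by
  have h2 : t * x * (y⁻¹) ^ 2 + (t * (x ^ 2 + 1) - x) * y⁻¹ + t * x = 0 := by
    linear_combination aux_inv_y hy h
  exact aux_inv_x hx h2

set_option maxHeartbeats 1000000 in
open Polynomial in
/-- The simple walk (steps `{(1,0),(-1,0),(0,1),(0,-1)}`) is not decoupled:
there are no rational functions `F ∈ ℚ(t)(x)` and `G ∈ ℚ(t)(y)` such that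
`xy = F(x) + G(y)` holds at all points `(x,y) ∈ Ω²` of the kernel curve
`K(x,y) = 0` at which `F` and `G` are defined. -/
theorem simple_walk_not_decoupled :
    ¬ ∃ F G : RatFunc (RatFunc ℚ),
      ∀ x y : Omega,
        Polynomial.eval₂ phi x F.denom ≠ 0 →
        Polynomial.eval₂ phi y G.denom ≠ 0 →
        tOm * (x ^ 2 * y + y + x * y ^ 2 + x) - x * y = 0 →
        x * y = RatFunc.eval phi x F + RatFunc.eval phi y G := by
  rintro ⟨F, G, H⟩
  have ht : tOm ≠ 0 := (_root_.map_ne_zero phi).mpr RatFunc.X_ne_zero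
  -- mapped denominators
  set fD : Polynomial Omega := F.denom.map phi with hfDdef
  set gD : Polynomial Omega := G.denom.map phi with hgDdef
  have hfD0 : fD ≠ 0 := Polynomial.map_ne_zero F.denom_ne_zero
  have hgD0 : gD ≠ 0 := Polynomial.map_ne_zero G.denom_ne_zero
  -- the "swap" quadratic: q c is the kernel, seen as a polynomial in x, at y = c
  set q : Omega → Polynomial Omega := fun c =>
    C (tOm * c) * X ^ 2 + C (tOm * (c ^ 2 + 1) - c) * X + C (tOm * c) with hqdef
  have hqeval : ∀ c x : Omega, (q c).eval x
      = tOm * c * x ^ 2 + (tOm * (c ^ 2 + 1) - c) * x + tOm * c := by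
    intro c x; simp [hqdef]
  have hq0 : ∀ c : Omega, q c ≠ 0 := by
    intro c hc
    by_cases h0 : c = 0
    · have h1 : (q c).eval 1 = 0 := by rw [hc]; simp
      rw [hqeval, h0] at h1
      apply ht
      linear_combination h1
    · have h1 : (q c).eval 0 = 0 := by rw [hc]; simp
      rw [hqeval] at h1
      simp at h1
      rcases h1 with h | h
      exacts [RatFunc.X_ne_zero h, h0 h]
  -- bad y-values and bad x-values
  set Cset : Set Omega := {1, -1} ∪ {c | gD.IsRoot c} ∪ (Inv.inv '' {c | gD.IsRoot c})
    with hCdef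
  have hCfin : Cset.Finite :=
    ((Set.toFinite _).union (Polynomial.finite_setOf_isRoot hgD0)).union
      ((Polynomial.finite_setOf_isRoot hgD0).image _)
  set B : Set Omega := {0, 1, -1} ∪ {x | fD.IsRoot x} ∪ (Inv.inv '' {x | fD.IsRoot x})
    ∪ ⋃ c ∈ Cset, {x | (q c).IsRoot x} with hBdef
  have hBfin : B.Finite :=
    (((Set.toFinite _).union (Polynomial.finite_setOf_isRoot hfD0)).union
      ((Polynomial.finite_setOf_isRoot hfD0).image _)).union
      (hCfin.biUnion fun c _ => Polynomial.finite_setOf_isRoot (hq0 c))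
  obtain ⟨x, hx⟩ := hBfin.infinite_compl.nonempty
  rw [Set.mem_compl_iff, hBdef] at hx
  simp only [Set.mem_union, not_or, Set.mem_insert_iff, Set.mem_singleton_iff,
    Set.mem_setOf_eq] at hx
  obtain ⟨⟨⟨hxmem, hxF⟩, hxFinv⟩, hxq⟩ := hx
  obtain ⟨hx0, hx1, hxm1⟩ := hxmem
  have hxFi : ¬ fD.IsRoot x⁻¹ := by
    intro h
    exact hxFinv ⟨x⁻¹, h, inv_inv x⟩
  have hxq' : ∀ c ∈ Cset, ¬ (q c).IsRoot x := by
    intro c hc hroot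
    exact hxq (Set.mem_biUnion hc hroot)
  -- the kernel as a quadratic in y, at this x; pick a root y
  have hdeg : (q x).degree = 2 := by
    rw [hqdef]
    exact Polynomial.degree_quadratic (mul_ne_zero ht hx0)
  obtain ⟨y, hy⟩ := IsAlgClosed.exists_root (q x) (by rw [hdeg]; exact two_ne_zero)
  have hpy : tOm * x * y ^ 2 + (tOm * (x ^ 2 + 1) - x) * y + tOm * x = 0 := by
    rw [← hqeval]; exact hy
  have hy0 : y ≠ 0 := by
    intro h
    rw [h] at hpy
    simp at hpy
    rcases hpy with h | h
    exacts [RatFunc.X_ne_zero h, hx0 h]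
  -- y avoids all the bad values, because x avoids the corresponding q c roots
  have hyCset : y ∉ Cset := by
    intro hyC
    apply hxq' y hyC
    show (q y).eval x = 0
    rw [hqeval]
    linear_combination hpy
  have hy1 : y ≠ 1 := fun h => hyCset (by rw [h, hCdef]; simp)
  have hym1 : y ≠ -1 := fun h => hyCset (by rw [h, hCdef]; simp)
  have hyG : ¬ gD.IsRoot y := fun h => hyCset (by rw [hCdef]; exact Or.inl (Or.inr h))
  have hyGi : ¬ gD.IsRoot y⁻¹ := by
    intro h
    exact hyCset (by rw [hCdef]; exact Or.inr ⟨y⁻¹, h, inv_inv y⟩)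
  -- reformulate the denominator conditions
  have hevF : ∀ z : Omega, ¬ fD.IsRoot z → Polynomial.eval₂ phi z F.denom ≠ 0 := by
    intro z hz
    rwa [Polynomial.eval₂_eq_eval_map, ← hfDdef]
  have hevG : ∀ z : Omega, ¬ gD.IsRoot z → Polynomial.eval₂ phi z G.denom ≠ 0 := by
    intro z hz
    rwa [Polynomial.eval₂_eq_eval_map, ← hgDdef]
  -- the four kernel points
  have k11 : tOm * (x ^ 2 * y + y + x * y ^ 2 + x) - x * y = 0 := by
    linear_combination hpy
  have k21 : tOm * (x⁻¹ ^ 2 * y + y + x⁻¹ * y ^ 2 + x⁻¹) - x⁻¹ * y = 0 :=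
    aux_inv_x hx0 hpy
  have k12 : tOm * (x ^ 2 * y⁻¹ + y⁻¹ + x * y⁻¹ ^ 2 + x) - x * y⁻¹ = 0 :=
    aux_inv_y hy0 hpy
  have k22 : tOm * (x⁻¹ ^ 2 * y⁻¹ + y⁻¹ + x⁻¹ * y⁻¹ ^ 2 + x⁻¹) - x⁻¹ * y⁻¹ = 0 :=
    aux_inv_xy hx0 hy0 hpy
  have e1 := H x y (hevF x hxF) (hevG y hyG) k11
  have e2 := H x⁻¹ y (hevF x⁻¹ hxFi) (hevG y hyG) k21
  have e3 := H x y⁻¹ (hevF x hxF) (hevG y⁻¹ hyGi) k12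
  have e4 := H x⁻¹ y⁻¹ (hevF x⁻¹ hxFi) (hevG y⁻¹ hyGi) k22
  have key : (x - x⁻¹) * (y - y⁻¹) = 0 := by linear_combination e1 - e2 - e3 + e4
  have hxx : x - x⁻¹ ≠ 0 := by
    rw [sub_ne_zero]
    intro h
    have h1 := mul_inv_cancel₀ hx0
    rw [← h] at h1
    have h2 : (x - 1) * (x + 1) = 0 := by linear_combination h1
    rcases mul_eq_zero.mp h2 with h | h
    · exact hx1 (sub_eq_zero.mp h)
    · exact hxm1 (eq_neg_of_add_eq_zero_left h)
  have hyy : y - y⁻¹ ≠ 0 := by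
    rw [sub_ne_zero]
    intro h
    have h1 := mul_inv_cancel₀ hy0
    rw [← h] at h1
    have h2 : (y - 1) * (y + 1) = 0 := by linear_combination h1
    rcases mul_eq_zero.mp h2 with h | h
    · exact hy1 (sub_eq_zero.mp h)
    · exact hym1 (eq_neg_of_add_eq_zero_left h)
  exact mul_ne_zero hxx hyy key
end
end
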